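/- arXiv:2106.00701 — 2 statements merged into one kernel-verified Lean document; each statement's English description precedes it below -/
import Mathlib

section
/- Let Γ be a digraph of order n with vertex set V, adjacency matrix A, and Laplacian L, where n is square-free or n = 2m with m square-free. If Γ is restricted-normal (i.e., QᴴLQ is normal for a restrictor matrix Q of order n and L is not normal), then Γ is a directed join of two normal digraphs: there exists a set S ⊆ V with S ≠ ∅ and S ≠ V such that A i j = 1 and A j i = 0 for all i ∈ S and j ∉ S, and the Laplacians of the induced subdigraphs on S and on V∖S are normal matrices. -/
/-!
Write `L` for the Laplacian, `C = L Lᵀ - Lᵀ L` and `z = Lᵀ e` for the vector of imbalances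
`d⁺ - d⁻`. The restrictor satisfies `Q Qᴴ = I - J / n`, and since `L e = 0`, normality of
`Qᴴ L Q` says that the symmetric matrix `-C - z zᵀ / n` is killed on both sides by this centering
projection, hence is of the form `a i + a j`. With `C i i = z i` this yields
`2 n C i j = n (z i + z j) + (z i - z j) ^ 2`.

So `n ∣ (z i - z j) ^ 2`, together with a parity condition, and for `n` square-free or twice
square-free this forces `n ∣ z i - z j`. As `|z i| < n` and `∑ z = 0`, either `z = 0`, and then
`C = 0`, or `z` equals `n - |S|` on a set `S` and `-|S|` off it. The net flow out of `S` is then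
the maximal `|S| |Sᶜ|`, so there is an arc from each vertex of `S` to each vertex of `Sᶜ` and none
back. Writing `L` in block form along `S ⊕ Sᶜ`, the identity on `S × S` and on `Sᶜ × Sᶜ` then says
that the Laplacians of the two induced subdigraphs commute with their transposes.
-/

open Matrix

/-- A 0/1 adjacency matrix with zero diagonal. -/
def IsAdj {m : Type*} [Fintype m] (A : Matrix m m ℝ) : Prop :=
  (∀ i j, A i j = 0 ∨ A i j = 1) ∧ ∀ i, A i i = 0

/-- Laplacian of a digraph: `L i i = d⁺(i)` and `L i j = -A i j` for `i ≠ j`. -/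
noncomputable def lap {m : Type*} [Fintype m] [DecidableEq m] (A : Matrix m m ℝ) :
    Matrix m m ℝ :=
  Matrix.diagonal (fun i => ∑ j, A i j) - A

/-- Complexified Laplacian. -/
noncomputable def lapC {m : Type*} [Fintype m] [DecidableEq m] (A : Matrix m m ℝ) :
    Matrix m m ℂ :=
  (lap A).map (fun x => (x : ℂ))

/-- Restricted numerical range `W_r(M) = { xᴴ M x : ‖x‖ = 1, xᴴ e = 0 }`. -/
noncomputable def rnr {m : Type*} [Fintype m] (M : Matrix m m ℂ) : Set ℂ :=
  { z | ∃ x : EuclideanSpace ℂ m, ‖x‖ = 1 ∧ star (x : m → ℂ) ⬝ᵥ (fun _ => (1 : ℂ)) = 0 ∧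
      z = star (x : m → ℂ) ⬝ᵥ M.mulVec (x : m → ℂ) }

/-- Restrictor matrix: orthonormal columns, all orthogonal to the all-ones vector. -/
def IsRestrictor {m k : Type*} [Fintype m] [Fintype k] [DecidableEq k]
    (Q : Matrix m k ℂ) : Prop :=
  Qᴴ * Q = 1 ∧ Qᴴ *ᵥ (fun _ => (1 : ℂ)) = 0

/-- Normal matrix: `Mᴴ M = M Mᴴ` (for real matrices, `Mᵀ M = M Mᵀ`). -/
def IsNormalM {m R : Type*} [Fintype m] [Mul (Matrix m m R)] [Star (Matrix m m R)]
    (M : Matrix m m R) : Prop := star M * M = M * star M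

/-- Balanced digraph: `d⁺(i) = d⁻(i)` for every vertex. -/
def Bal {m : Type*} [Fintype m] (A : Matrix m m ℝ) : Prop :=
  ∀ i, ∑ j, A i j = ∑ j, A j i

section Centering

variable {m K : Type*} [Fintype m] [DecidableEq m] [Field K]

variable (m K) in
def centeringMatrix : Matrix m m K :=
  1 - of fun _ _ => (Fintype.card m : K)⁻¹

theorem centeringMatrix_transpose : (centeringMatrix m K)ᵀ = centeringMatrix m K := by
  rw [centeringMatrix, transpose_sub, transpose_one]
  rfl

theorem map_centeringMatrix_ofReal :
    (centeringMatrix m ℝ).map ((↑) : ℝ → ℂ) = centeringMatrix m ℂ := by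
  ext i j
  by_cases hij : i = j <;> simp [centeringMatrix, one_apply, hij]

theorem transpose_mul_centeringMatrix_mul_apply (M : Matrix m m K) (i j : m) :
    (Mᵀ * centeringMatrix m K * M) i j =
      (Mᵀ * M) i j - (Fintype.card m : K)⁻¹ * (∑ k, M k i) * ∑ k, M k j := by
  rw [centeringMatrix, Matrix.mul_sub, Matrix.sub_mul, Matrix.mul_one, Matrix.sub_apply]
  simp only [mul_apply, transpose_apply, of_apply, Finset.sum_mul, Finset.mul_sum]
  exact congrArg _ (Finset.sum_congr rfl fun _ _ => Finset.sum_congr rfl fun _ _ => by ring)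

theorem centeringMatrix_mul_mul_centeringMatrix_apply (N : Matrix m m K) (i j : m) :
    (centeringMatrix m K * N * centeringMatrix m K) i j =
      N i j - (Fintype.card m : K)⁻¹ * (∑ k, N k j + ∑ k, N i k) +
        (Fintype.card m : K)⁻¹ ^ 2 * ∑ k, ∑ l, N k l := by
  have hexpand : ∀ J : Matrix m m K, (1 - J) * N * (1 - J) = N - J * N - N * J + J * N * J :=
    fun J => by noncomm_ring
  rw [centeringMatrix, hexpand]
  simp only [Matrix.add_apply, Matrix.sub_apply, mul_apply, of_apply, ← Finset.mul_sum,
    ← Finset.sum_mul]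
  rw [Finset.sum_comm]
  ring

theorem two_mul_apply_eq_of_centeringMatrix_sandwich {N : Matrix m m K} (hN : Nᵀ = N)
    (h : centeringMatrix m K * N * centeringMatrix m K = 0) (i j : m) :
    2 * N i j = N i i + N j j := by
  have hcol : ∀ j, ∑ k, N k j = ∑ k, N j k := fun j => by
    conv_rhs => rw [← hN]
    rfl
  have h' := fun i j => (centeringMatrix_mul_mul_centeringMatrix_apply N i j).symm.trans
    ((congrFun (congrFun h i) j).trans (zero_apply i j))
  -- `h'` says `N i j = (c j + r i) / n - t` for column sums `c` and row sums `r`, and `c = r`.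
  linear_combination 2 * h' i j - h' i i - h' j j +
    (Fintype.card m : K)⁻¹ * (2 * hcol j - hcol i - hcol j)

end Centering

section SelfCommutator

variable {R : Type*} [CommRing R]

def selfCommutator {m : Type*} [Fintype m] (M : Matrix m m R) : Matrix m m R :=
  M * Mᵀ - Mᵀ * M

theorem selfCommutator_submatrix_equiv {m n : Type*} [Fintype m] [Fintype n] (M : Matrix m m R)
    (e : n ≃ m) : selfCommutator (M.submatrix e e) = (selfCommutator M).submatrix e e := by
  rw [selfCommutator, selfCommutator, transpose_submatrix, submatrix_mul_equiv,
    submatrix_mul_equiv]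
  rfl

theorem selfCommutator_add_smul_one {m : Type*} [Fintype m] [DecidableEq m] (M : Matrix m m R)
    (c : R) : selfCommutator (M + c • 1) = selfCommutator M := by
  simp only [selfCommutator, transpose_add, transpose_smul, transpose_one, Matrix.add_mul,
    Matrix.mul_add, Matrix.smul_mul, Matrix.mul_smul, Matrix.one_mul, Matrix.mul_one, smul_add]
  abel

variable {m n : Type*} [Fintype m] [Fintype n]

theorem toBlocks₁₁_selfCommutator_fromBlocks (A : Matrix m m R) (B : Matrix m n R)
    (D : Matrix n n R) :
    (selfCommutator (fromBlocks A B 0 D)).toBlocks₁₁ = selfCommutator A + B * Bᵀ := by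
  ext i j
  simp [selfCommutator, fromBlocks_transpose, fromBlocks_multiply, toBlocks₁₁]
  ring

theorem toBlocks₂₂_selfCommutator_fromBlocks (A : Matrix m m R) (B : Matrix m n R)
    (D : Matrix n n R) :
    (selfCommutator (fromBlocks A B 0 D)).toBlocks₂₂ = selfCommutator D - Bᵀ * B := by
  ext i j
  simp [selfCommutator, fromBlocks_transpose, fromBlocks_multiply, toBlocks₂₂]
  ring

end SelfCommutator

theorem isNormalM_iff_selfCommutator_eq_zero {m : Type*} [Fintype m] {M : Matrix m m ℝ} :
    IsNormalM M ↔ selfCommutator M = 0 := by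
  rw [IsNormalM, star_eq_conjTranspose, conjTranspose_eq_transpose_of_trivial, selfCommutator,
    sub_eq_zero, eq_comm]

/-- Completing `Q` by the unit vector `e / √n` gives a unitary matrix. -/
theorem IsRestrictor.mul_conjTranspose {m k : Type*} [Fintype m] [Fintype k] [DecidableEq m]
    [DecidableEq k] {Q : Matrix m k ℂ} (hQ : IsRestrictor Q)
    (hcard : Fintype.card m = Fintype.card k + 1) :
    Q * Qᴴ = centeringMatrix m ℂ := by
  set n := Fintype.card m
  set c : ℂ := (((Real.sqrt n)⁻¹ : ℝ) : ℂ)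
  have hc : starRingEnd ℂ c * c = (n : ℂ)⁻¹ := by
    rw [Complex.conj_ofReal, ← Complex.ofReal_mul, ← mul_inv,
      Real.mul_self_sqrt n.cast_nonneg]
    push_cast; rfl
  set u : Matrix m Unit ℂ := of fun _ _ => c
  have hQu : Qᴴ * u = 0 := by
    ext a x
    have hcol : ∑ i, starRingEnd ℂ (Q i a) = 0 := by
      simpa [mulVec, dotProduct] using congrFun hQ.2 a
    simp [u, mul_apply, ← Finset.sum_mul, hcol]
  have huQ : uᴴ * Q = 0 := by
    rw [← conjTranspose_conjTranspose Q, ← conjTranspose_mul, hQu, conjTranspose_zero]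
  have huu : uᴴ * u = 1 := by
    ext x y
    change ∑ _ : m, starRingEnd ℂ c * c = _
    rw [Finset.sum_const, Finset.card_univ, nsmul_eq_mul, hc, one_apply_eq]
    exact mul_inv_cancel₀ (Nat.cast_ne_zero.mpr (by change n ≠ 0; omega))
  have hVV : (fromCols Q u)ᴴ * fromCols Q u = 1 := by
    rw [conjTranspose_fromCols_eq_fromRows_conjTranspose, fromRows_mul_fromCols, hQ.1, hQu,
      huQ, huu, fromBlocks_one]
  have e : k ⊕ Unit ≃ m := Fintype.equivOfCardEq (by simp [hcard, n])
  have hVV' := (mul_eq_one_comm_of_equiv e).mp hVV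
  rw [conjTranspose_fromCols_eq_fromRows_conjTranspose, fromCols_mul_fromRows] at hVV'
  have huu' : u * uᴴ = of fun _ _ => (n : ℂ)⁻¹ := by
    ext i j
    simp [u, mul_apply, ← hc, mul_comm]
  rw [centeringMatrix, ← hVV', huu', add_sub_cancel_right]

theorem mul_conjTranspose_sandwich_eq_zero_of_isNormalM {m k : Type*} [Fintype m] [Fintype k]
    {Q : Matrix m k ℂ} {L : Matrix m m ℂ} (h : IsNormalM (Qᴴ * L * Q)) :
    Q * Qᴴ * (Lᴴ * (Q * Qᴴ) * L - L * (Q * Qᴴ) * Lᴴ) * (Q * Qᴴ) = 0 :=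
  calc _ = Q * (star (Qᴴ * L * Q) * (Qᴴ * L * Q) - Qᴴ * L * Q * star (Qᴴ * L * Q)) * Qᴴ := by
        simp only [star_eq_conjTranspose, conjTranspose_mul, conjTranspose_conjTranspose,
          Matrix.mul_sub, Matrix.sub_mul, Matrix.mul_assoc]
    _ = 0 := by rw [h, sub_self, Matrix.mul_zero, Matrix.zero_mul]

theorem centeringMatrix_sandwich_eq_zero_of_isNormalM {m k : Type*} [Fintype m] [DecidableEq m]
    [Fintype k] [DecidableEq k] {Q : Matrix m k ℂ} (hQ : IsRestrictor Q)
    (hcard : Fintype.card m = Fintype.card k + 1) {L : Matrix m m ℝ}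
    (h : IsNormalM (Qᴴ * L.map ((↑) : ℝ → ℂ) * Q)) :
    centeringMatrix m ℝ * (Lᵀ * centeringMatrix m ℝ * L - L * centeringMatrix m ℝ * Lᵀ) *
      centeringMatrix m ℝ = 0 := by
  apply map_injective Complex.ofReal_injective
  have hLt : Lᵀ.map ((↑) : ℝ → ℂ) = (L.map ((↑) : ℝ → ℂ))ᴴ := by
    ext i j
    simp
  have := mul_conjTranspose_sandwich_eq_zero_of_isNormalM h
  rw [hQ.mul_conjTranspose hcard] at this
  have hφ : ∀ M : Matrix m m ℝ, M.map ((↑) : ℝ → ℂ) = Complex.ofRealHom.mapMatrix M :=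
    fun _ => rfl
  rw [← map_centeringMatrix_ofReal, ← hLt, hφ, hφ, hφ] at this
  simpa only [hφ, map_mul, map_sub, map_zero] using this

theorem selfCommutator_apply_of_isNormalM {m k : Type*} [Fintype m] [DecidableEq m]
    [Fintype k] [DecidableEq k] {Q : Matrix m k ℂ} (hQ : IsRestrictor Q)
    (hcard : Fintype.card m = Fintype.card k + 1) {L : Matrix m m ℝ}
    (hL : ∀ i, ∑ j, L i j = 0) (h : IsNormalM (Qᴴ * L.map ((↑) : ℝ → ℂ) * Q)) (i j : m) :
    2 * (Fintype.card m : ℝ) * selfCommutator L i j =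
      (Fintype.card m : ℝ) * (selfCommutator L i i + selfCommutator L j j) +
        (∑ k, L k i - ∑ k, L k j) ^ 2 := by
  set n : ℝ := (Fintype.card m : ℝ)
  set N := Lᵀ * centeringMatrix m ℝ * L - L * centeringMatrix m ℝ * Lᵀ
  have hN : Nᵀ = N := by
    simp only [N, transpose_sub, transpose_mul, transpose_transpose, centeringMatrix_transpose,
      Matrix.mul_assoc]
  have hNapply : ∀ i j, N i j = -selfCommutator L i j - n⁻¹ * (∑ k, L k i) * ∑ k, L k j := by
    intro i j
    have hLLt := transpose_mul_centeringMatrix_mul_apply Lᵀ i j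
    simp only [transpose_transpose, transpose_apply, hL, mul_zero, sub_zero] at hLLt
    simp only [N, Matrix.sub_apply, transpose_mul_centeringMatrix_mul_apply, hLLt, selfCommutator]
    ring
  have hsand := two_mul_apply_eq_of_centeringMatrix_sandwich hN
    (centeringMatrix_sandwich_eq_zero_of_isNormalM hQ hcard h) i j
  have hn : n * n⁻¹ = 1 :=
    mul_inv_cancel₀ (Nat.cast_ne_zero.mpr (Fintype.card_pos_iff.mpr ⟨i⟩).ne')
  simp only [hNapply] at hsand
  linear_combination (-n) * hsand + (∑ k, L k i - ∑ k, L k j) ^ 2 * hn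

theorem Nat.squarefree_or_eq_four_mul {n : ℕ} (hn : Squarefree n ∨ ∃ m, n = 2 * m ∧ Squarefree m) :
    Squarefree n ∨ ∃ m, n = 4 * m ∧ Squarefree m ∧ Odd m := by
  rcases hn with hn | ⟨m, rfl, hm⟩
  · exact .inl hn
  rcases m.even_or_odd with ⟨m', rfl⟩ | hodd
  · rw [← two_mul, Nat.squarefree_mul_iff, Nat.coprime_two_left] at hm
    exact .inr ⟨m', by ring, hm.2.2, hm.1⟩
  · exact .inl (Nat.squarefree_mul_iff.mpr ⟨Nat.coprime_two_left.mpr hodd, Nat.squarefree_two, hm⟩)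

/-- The parity condition is what makes `n = 4 m` work: there `n ∣ d ^ 2` alone only gives
`n ∣ 2 d`. -/
theorem Int.natCast_dvd_of_sq_eq_mul {n : ℕ} (hn : Squarefree n ∨ ∃ m, n = 2 * m ∧ Squarefree m)
    {d k : ℤ} (hdk : d ^ 2 = n * k) (hpar : Even (k + d)) : (n : ℤ) ∣ d := by
  rcases Nat.squarefree_or_eq_four_mul hn with hsq | ⟨m, rfl, hsq, hodd⟩
  · exact ((Int.squarefree_natCast.mpr hsq).dvd_pow_iff_dvd two_ne_zero).mp ⟨k, hdk⟩
  push_cast at hdk ⊢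
  have hm : (m : ℤ) ∣ d :=
    ((Int.squarefree_natCast.mpr hsq).dvd_pow_iff_dvd two_ne_zero).mp ⟨4 * k, by rw [hdk]; ring⟩
  have h4 : (4 : ℤ) ∣ d := by
    obtain ⟨e, rfl⟩ : Even d := (Int.even_pow.mp ⟨2 * m * k, by rw [hdk]; ring⟩).1
    have he : e ^ 2 = m * k := by linarith [hdk]
    have hk : Even k := (Int.even_add.mp hpar).mpr ⟨e, rfl⟩
    obtain ⟨f, rfl⟩ : Even e := (Int.even_pow.mp (he ▸ hk.mul_left _)).1
    exact ⟨f, by ring⟩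
  have hcop : IsCoprime (4 : ℤ) m := by
    simpa using (Int.isCoprime_two_left.mpr (hodd.natCast (R := ℤ))).pow_left (m := 2)
  exact hcop.mul_dvd h4 hm

theorem Int.natCast_dvd_sub_of_two_mul_mul_eq {n : ℕ}
    (hn : Squarefree n ∨ ∃ m, n = 2 * m ∧ Squarefree m) {c x y : ℤ}
    (h : 2 * n * c = n * (x + y) + (x - y) ^ 2) : (n : ℤ) ∣ x - y :=
  Int.natCast_dvd_of_sq_eq_mul hn (k := 2 * c - x - y) (by linear_combination -h) ⟨c - y, by ring⟩

theorem Int.eq_of_dvd_sub_of_pos_of_lt {n x y : ℤ} (hdvd : n ∣ x - y) (hx₀ : 0 < x) (hx : x < n)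
    (hy₀ : 0 < y) (hy : y < n) : x = y :=
  sub_eq_zero.mp (Int.eq_zero_of_abs_lt_dvd hdvd (abs_lt.mpr ⟨by omega, by omega⟩))

theorem Int.eq_add_of_dvd_sub_of_pos_of_nonpos {n x y : ℤ} (hdvd : n ∣ x - y) (hx₀ : 0 < x)
    (hx : x < n) (hy₀ : y ≤ 0) (hy : -n < y) : x = y + n := by
  have := Int.eq_zero_of_abs_lt_dvd (dvd_sub_self_right.mpr hdvd) (abs_lt.mpr ⟨by omega, by omega⟩)
  omega

open Finset in
theorem eq_zero_or_exists_two_valued {ι : Type*} [Fintype ι] [DecidableEq ι] {z : ι → ℤ}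
    (hsum : ∑ i, z i = 0) (hbound : ∀ i, |z i| < Fintype.card ι)
    (hdvd : ∀ i j, (Fintype.card ι : ℤ) ∣ z i - z j) :
    (∀ i, z i = 0) ∨ ∃ S : Finset ι, S.Nonempty ∧ S ≠ univ ∧
      (∀ i ∈ S, z i = Fintype.card ι - #S) ∧ ∀ i ∉ S, z i = -#S := by
  set n := Fintype.card ι
  set S := univ.filter (fun i => 0 < z i)
  have hmem : ∀ i, i ∈ S ↔ 0 < z i := by simp [S]
  by_cases hS : S.Nonempty ∧ S ≠ univ
  swap
  · left
    rcases not_and_or.mp hS with hS | hS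
    · have hnonpos : ∀ i ∈ univ, z i ≤ 0 := fun i _ => by
        simpa [hmem] using fun h : i ∈ S => hS ⟨i, h⟩
      exact fun i => (sum_eq_zero_iff_of_nonpos hnonpos).mp hsum i (mem_univ i)
    · have hnonneg : ∀ i ∈ univ, 0 ≤ z i := fun i _ =>
        ((hmem i).mp (not_not.mp hS ▸ mem_univ i)).le
      exact fun i => (sum_eq_zero_iff_of_nonneg hnonneg).mp hsum i (mem_univ i)
  right
  obtain ⟨a, ha⟩ := hS.1
  have hlt : ∀ i, -(n : ℤ) < z i ∧ z i < n := fun i => abs_lt.mp (hbound i)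
  have hzS : ∀ i ∈ S, z i = z a := fun i hi =>
    Int.eq_of_dvd_sub_of_pos_of_lt (hdvd i a) ((hmem i).mp hi) (hlt i).2 ((hmem a).mp ha) (hlt a).2
  have hzSc : ∀ i ∉ S, z i = z a - n := fun i hi => by
    have := Int.eq_add_of_dvd_sub_of_pos_of_nonpos (hdvd a i) ((hmem a).mp ha) (hlt a).2
      (not_lt.mp ((hmem i).not.mp hi)) (hlt i).1
    omega
  have hcompl : ((#Sᶜ : ℕ) : ℤ) = n - #S := by
    rw [card_compl, Nat.cast_sub (card_le_univ S)]
  have hza : z a = n - #S := by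
    have htotal : ∑ i ∈ S, z i + ∑ i ∈ Sᶜ, z i = n * (z a - (n - #S)) := by
      rw [sum_congr rfl hzS, sum_congr rfl fun i hi => hzSc i (mem_compl.mp hi), sum_const,
        sum_const, nsmul_eq_mul, nsmul_eq_mul, hcompl]
      ring
    rw [sum_add_sum_compl, hsum] at htotal
    have hn : (n : ℤ) ≠ 0 := Nat.cast_ne_zero.mpr (Fintype.card_pos_iff.mpr ⟨a⟩).ne'
    linarith [(mul_eq_zero.mp htotal.symm).resolve_left hn]
  exact ⟨S, hS.1, hS.2, fun i hi => (hzS i hi).trans hza,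
    fun i hi => by rw [hzSc i hi, hza]; ring⟩

section Digraph

variable {m : Type*} [Fintype m] [DecidableEq m]

def imbalance (A : Matrix m m ℝ) (i : m) : ℝ :=
  ∑ j, A i j - ∑ j, A j i

theorem lap_apply (A : Matrix m m ℝ) (i j : m) :
    lap A i j = (if i = j then ∑ k, A i k else 0) - A i j := by
  simp [lap, diagonal_apply]

theorem sum_lap_apply_left (A : Matrix m m ℝ) (i : m) : ∑ j, lap A i j = 0 := by
  simp [lap_apply, Finset.sum_sub_distrib]

theorem sum_lap_apply_right (A : Matrix m m ℝ) (i : m) : ∑ k, lap A k i = imbalance A i := by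
  simp [lap_apply, Finset.sum_sub_distrib, imbalance]

theorem selfCommutator_lap_apply_self {A : Matrix m m ℝ} (hA : IsAdj A) (i : m) :
    selfCommutator (lap A) i i = imbalance A i := by
  have hA2 : ∀ j k, A j k * A j k = A j k := fun j k => by
    rcases hA.1 j k with h | h <;> simp [h]
  have hrow : ∀ k, lap A i k * lap A i k = (if i = k then (∑ j, A i j) ^ 2 else 0) + A i k := by
    intro k
    by_cases hik : i = k
    · subst hik
      simp only [lap_apply, if_true, hA.2, sub_zero, add_zero]
      ring
    · simp [lap_apply, hik, hA2]
  have hcol : ∀ k, lap A k i * lap A k i = (if i = k then (∑ j, A i j) ^ 2 else 0) + A k i := by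
    intro k
    by_cases hik : i = k
    · subst hik
      simp only [lap_apply, if_true, hA.2, sub_zero, add_zero]
      ring
    · simp [lap_apply, hik, Ne.symm hik, hA2]
  simp only [selfCommutator, Matrix.sub_apply, mul_apply, transpose_apply, hrow, hcol,
    Finset.sum_add_distrib, Finset.sum_ite_eq, Finset.mem_univ, if_true, imbalance]
  ring

end Digraph

theorem selfCommutator_lap_apply {m k : Type*} [Fintype m] [DecidableEq m] [Fintype k]
    [DecidableEq k] {A : Matrix m m ℝ} (hA : IsAdj A) {Q : Matrix m k ℂ} (hQ : IsRestrictor Q)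
    (hcard : Fintype.card m = Fintype.card k + 1) (hrn : IsNormalM (Qᴴ * lapC A * Q))
    (i j : m) :
    2 * (Fintype.card m : ℝ) * selfCommutator (lap A) i j =
      Fintype.card m * (imbalance A i + imbalance A j) + (imbalance A i - imbalance A j) ^ 2 := by
  simpa only [sum_lap_apply_right, selfCommutator_lap_apply_self hA] using
    selfCommutator_apply_of_isNormalM hQ hcard (sum_lap_apply_left A) hrn i j

section Imbalance

open Finset

variable {m : Type*} [Fintype m] {A : Matrix m m ℝ}

theorem sum_imbalance (A : Matrix m m ℝ) : ∑ i, imbalance A i = 0 := by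
  simp only [imbalance, sum_sub_distrib]
  rw [sum_comm, sub_self]

theorem IsAdj.apply_mem_range (hA : IsAdj A) (i j : m) :
    A i j ∈ (Int.castRingHom ℝ).range := by
  rcases hA.1 i j with h | h <;> rw [h]
  exacts [zero_mem _, one_mem _]

theorem IsAdj.imbalance_mem_range (hA : IsAdj A) (i : m) :
    imbalance A i ∈ (Int.castRingHom ℝ).range :=
  have hA' := hA.apply_mem_range
  sub_mem (sum_mem fun j _ => hA' i j) (sum_mem fun j _ => hA' j i)

variable [DecidableEq m]

theorem sum_le_card_sub_one {f : m → ℝ} (hf : ∀ j, f j ≤ 1) {i : m} (hi : f i = 0) :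
    ∑ j, f j ≤ Fintype.card m - 1 :=
  calc ∑ j, f j = ∑ j ∈ univ.erase i, f j := (sum_erase _ hi).symm
    _ ≤ ∑ j ∈ univ.erase i, 1 := sum_le_sum fun j _ => hf j
    _ = Fintype.card m - 1 := by
      rw [sum_const, card_erase_of_mem (mem_univ i), card_univ, nsmul_one,
        Nat.cast_sub (Fintype.card_pos_iff.mpr ⟨i⟩), Nat.cast_one]

theorem IsAdj.abs_imbalance_lt (hA : IsAdj A) (i : m) : |imbalance A i| < Fintype.card m := by
  have h01 : ∀ j k, 0 ≤ A j k ∧ A j k ≤ 1 := fun j k => by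
    rcases hA.1 j k with h | h <;> simp [h]
  have hout := sum_le_card_sub_one (fun j => (h01 i j).2) (hA.2 i)
  have hin := sum_le_card_sub_one (f := fun j => A j i) (fun j => (h01 j i).2) (hA.2 i)
  have hout₀ : 0 ≤ ∑ j, A i j := sum_nonneg fun j _ => (h01 i j).1
  have hin₀ : 0 ≤ ∑ j, A j i := sum_nonneg fun j _ => (h01 j i).1
  rw [abs_lt, imbalance]
  constructor <;> linarith

theorem IsAdj.selfCommutator_lap_mem_range (hA : IsAdj A) (i j : m) :
    selfCommutator (lap A) i j ∈ (Int.castRingHom ℝ).range := by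
  have hA' := hA.apply_mem_range
  have hL : ∀ j k, lap A j k ∈ (Int.castRingHom ℝ).range := fun j k => by
    rw [lap_apply]
    refine sub_mem ?_ (hA' j k)
    split_ifs
    exacts [sum_mem fun l _ => hA' j l, zero_mem _]
  simp only [selfCommutator, Matrix.sub_apply, mul_apply, transpose_apply]
  exact sub_mem (sum_mem fun k _ => mul_mem (hL i k) (hL j k))
    (sum_mem fun k _ => mul_mem (hL k i) (hL k j))

theorem selfCommutator_apply_eq_of_imbalance_eq {i j : m} {t : ℝ}
    (hkey : 2 * (Fintype.card m : ℝ) * selfCommutator (lap A) i j =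
      Fintype.card m * (imbalance A i + imbalance A j) + (imbalance A i - imbalance A j) ^ 2)
    (hi : imbalance A i = t) (hj : imbalance A j = t) : selfCommutator (lap A) i j = t := by
  have hn : (2 * Fintype.card m : ℝ) ≠ 0 := by
    have := Fintype.card_pos_iff.mpr ⟨i⟩
    positivity
  rw [hi, hj] at hkey
  exact mul_left_cancel₀ hn (by linear_combination hkey)

theorem IsAdj.exists_imbalance_two_valued (hA : IsAdj A)
    (hn : Squarefree (Fintype.card m) ∨ ∃ k, Fintype.card m = 2 * k ∧ Squarefree k)
    (hkey : ∀ i j, 2 * (Fintype.card m : ℝ) * selfCommutator (lap A) i j =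
      Fintype.card m * (imbalance A i + imbalance A j) + (imbalance A i - imbalance A j) ^ 2)
    (hnn : ¬ IsNormalM (lap A)) :
    ∃ S : Finset m, S.Nonempty ∧ S ≠ univ ∧ (∀ i ∈ S, imbalance A i = Fintype.card m - #S) ∧
      ∀ i ∉ S, imbalance A i = -#S := by
  choose z hz using hA.imbalance_mem_range
  choose c hc using hA.selfCommutator_lap_mem_range
  simp only [eq_intCast] at hz hc
  have hkeyZ : ∀ i j, 2 * Fintype.card m * c i j =
      Fintype.card m * (z i + z j) + (z i - z j) ^ 2 := fun i j => by
    exact_mod_cast (hz i ▸ hz j ▸ hc i j ▸ hkey i j)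
  have hsum : ∑ i, (z i : ℝ) = 0 := by simpa only [hz] using sum_imbalance A
  rcases eq_zero_or_exists_two_valued (z := z) (by exact_mod_cast hsum)
    (fun i => by exact_mod_cast hz i ▸ hA.abs_imbalance_lt i)
    (fun i j => Int.natCast_dvd_sub_of_two_mul_mul_eq hn (hkeyZ i j)) with
    hz0 | ⟨S, hSne, hSuniv, hzS, hzSc⟩
  · refine absurd ?_ hnn
    rw [isNormalM_iff_selfCommutator_eq_zero]
    ext i j
    exact selfCommutator_apply_eq_of_imbalance_eq (hkey i j) (by simp [← hz, hz0])
      (by simp [← hz, hz0])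
  · exact ⟨S, hSne, hSuniv, fun i hi => by simp [← hz, hzS i hi],
      fun i hi => by simp [← hz, hzSc i hi]⟩

end Imbalance

section DirectedJoin

open Finset

variable {m : Type*} [Fintype m] [DecidableEq m] {A : Matrix m m ℝ} {S : Finset m}

theorem sum_imbalance_eq_sum_sum_compl (A : Matrix m m ℝ) (S : Finset m) :
    ∑ i ∈ S, imbalance A i = ∑ i ∈ S, ∑ j ∈ Sᶜ, (A i j - A j i) := by
  have hinner : ∑ i ∈ S, ∑ j ∈ S, (A i j - A j i) = 0 := by
    simp only [sum_sub_distrib]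
    rw [sum_comm (f := fun i j => A j i), sub_self]
  calc ∑ i ∈ S, imbalance A i
      = ∑ i ∈ S, (∑ j ∈ S, (A i j - A j i) + ∑ j ∈ Sᶜ, (A i j - A j i)) :=
        sum_congr rfl fun i _ => by rw [sum_add_sum_compl, imbalance, sum_sub_distrib]
    _ = ∑ i ∈ S, ∑ j ∈ Sᶜ, (A i j - A j i) := by rw [sum_add_distrib, hinner, zero_add]

theorem directedJoin_of_card_mul_card_le_sum_imbalance (hA : IsAdj A)
    (h : (#S * #Sᶜ : ℝ) ≤ ∑ i ∈ S, imbalance A i) :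
    ∀ i ∈ S, ∀ j ∉ S, A i j = 1 ∧ A j i = 0 := by
  have hle : ∀ i j, A i j - A j i ≤ 1 := fun i j => by
    rcases hA.1 i j with h1 | h1 <;> rcases hA.1 j i with h2 | h2 <;> simp [h1, h2]
  have hsum : ∑ i ∈ S, ∑ j ∈ Sᶜ, (A i j - A j i) = ∑ i ∈ S, ∑ j ∈ Sᶜ, (1 : ℝ) := by
    refine le_antisymm (sum_le_sum fun i _ => sum_le_sum fun j _ => hle i j) ?_
    simpa [sum_imbalance_eq_sum_sum_compl] using h
  intro i hi j hj
  have hij := (sum_eq_sum_iff_of_le fun k _ => hle i k).mp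
    ((sum_eq_sum_iff_of_le fun i _ => sum_le_sum fun k _ => hle i k).mp hsum i hi) j
    (mem_compl.mpr hj)
  rcases hA.1 i j with h1 | h1 <;> rcases hA.1 j i with h2 | h2 <;>
    first | exact ⟨h1, h2⟩ | norm_num [h1, h2] at hij

theorem lap_submatrix_sumCompl (hjoin : ∀ i ∈ S, ∀ j ∉ S, A i j = 1 ∧ A j i = 0) :
    (lap A).submatrix (Equiv.sumCompl (· ∈ S)) (Equiv.sumCompl (· ∈ S)) =
      fromBlocks
        (lap (A.submatrix (fun x : {i // i ∈ S} => (x : m)) (fun x => x)) +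
          (Fintype.card {i // i ∉ S} : ℝ) • 1)
        (of fun _ _ => -1) 0
        (lap (A.submatrix (fun x : {i // i ∉ S} => (x : m)) (fun x => x))) := by
  have hsplit : ∀ i, ∑ k, A i k = ∑ k : {k // k ∈ S}, A i k + ∑ k : {k // k ∉ S}, A i k :=
    fun i => by convert (Fintype.sum_subtype_add_sum_subtype (· ∈ S) (A i)).symm
  have hout : ∀ i ∈ S, ∑ k : {k // k ∉ S}, A i k = Fintype.card {k // k ∉ S} := fun i hi => by
    simp [Finset.sum_congr rfl fun (k : {k // k ∉ S}) _ => (hjoin i hi k k.2).1]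
  have hin : ∀ i ∉ S, ∑ k : {k // k ∈ S}, A i k = 0 := fun i hi => by
    simp [Finset.sum_congr rfl fun (k : {k // k ∈ S}) _ => (hjoin k k.2 i hi).2]
  ext (a | a) (b | b)
  · by_cases hab : a = b
    · subst hab
      simp only [submatrix_apply, Equiv.sumCompl_apply_inl, fromBlocks_apply₁₁, Matrix.add_apply,
        lap_apply, hsplit, hout a a.2, if_true, Matrix.smul_apply, one_apply_eq, smul_eq_mul,
        mul_one]
      ring
    · simp [lap_apply, hab, Subtype.coe_ne_coe.mpr hab]
  · simp [lap_apply, ne_of_mem_of_not_mem a.2 b.2, (hjoin a a.2 b b.2).1]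
  · simp [lap_apply, ne_of_mem_of_not_mem b.2 a.2 |>.symm, (hjoin b b.2 a a.2).2]
  · by_cases hab : a = b
    · subst hab
      simp only [submatrix_apply, Equiv.sumCompl_apply_inr, fromBlocks_apply₂₂, lap_apply, hsplit,
        hin a a.2, zero_add]
    · simp [lap_apply, hab, Subtype.coe_ne_coe.mpr hab]

theorem isNormalM_lap_submatrix_mem_of_directedJoin
    (hjoin : ∀ i ∈ S, ∀ j ∉ S, A i j = 1 ∧ A j i = 0)
    (hC : ∀ a ∈ S, ∀ b ∈ S, selfCommutator (lap A) a b = Fintype.card m - #S) :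
    IsNormalM (lap (A.submatrix (fun x : {i // i ∈ S} => (x : m)) (fun x => x))) := by
  have h := congrArg toBlocks₁₁ (congrArg selfCommutator (lap_submatrix_sumCompl hjoin))
  rw [selfCommutator_submatrix_equiv, toBlocks₁₁_selfCommutator_fromBlocks,
    selfCommutator_add_smul_one] at h
  have hBB : ((selfCommutator (lap A)).submatrix (Equiv.sumCompl (· ∈ S))
      (Equiv.sumCompl (· ∈ S))).toBlocks₁₁ =
        (of fun (_ : {i // i ∈ S}) (_ : {i // i ∉ S}) => (-1 : ℝ)) *
          (of fun (_ : {i // i ∈ S}) (_ : {i // i ∉ S}) => (-1 : ℝ))ᵀ := by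
    ext a b
    simp [toBlocks₁₁, mul_apply, hC a a.2 b b.2, Nat.cast_sub (Finset.card_le_univ S)]
  rw [isNormalM_iff_selfCommutator_eq_zero, ← add_eq_right, ← h, hBB]

theorem isNormalM_lap_submatrix_notMem_of_directedJoin
    (hjoin : ∀ i ∈ S, ∀ j ∉ S, A i j = 1 ∧ A j i = 0)
    (hC : ∀ a ∉ S, ∀ b ∉ S, selfCommutator (lap A) a b = -#S) :
    IsNormalM (lap (A.submatrix (fun x : {i // i ∉ S} => (x : m)) (fun x => x))) := by
  have h := congrArg toBlocks₂₂ (congrArg selfCommutator (lap_submatrix_sumCompl hjoin))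
  rw [selfCommutator_submatrix_equiv, toBlocks₂₂_selfCommutator_fromBlocks] at h
  have hBB : ((selfCommutator (lap A)).submatrix (Equiv.sumCompl (· ∈ S))
      (Equiv.sumCompl (· ∈ S))).toBlocks₂₂ =
        -((of fun (_ : {i // i ∈ S}) (_ : {i // i ∉ S}) => (-1 : ℝ))ᵀ *
          of fun (_ : {i // i ∈ S}) (_ : {i // i ∉ S}) => (-1 : ℝ)) := by
    ext a b
    simp [toBlocks₂₂, mul_apply, hC a a.2 b b.2]
  rw [isNormalM_iff_selfCommutator_eq_zero, ← sub_eq_neg_self, ← h, hBB]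

end DirectedJoin



/-- If the order `n` is square-free or twice a square-free number and `Γ`
is restricted-normal, then `Γ` is a directed join of two normal digraphs. -/
theorem restricted_normal_is_directed_join_of_squarefree {n : ℕ}
    (A : Matrix (Fin n) (Fin n) ℝ) (hA : IsAdj A)
    (hn : Squarefree n ∨ ∃ m, n = 2 * m ∧ Squarefree m)
    (Q : Matrix (Fin n) (Fin (n - 1)) ℂ) (hQ : IsRestrictor Q)
    (hrn : IsNormalM (Qᴴ * lapC A * Q)) (hnn : ¬ IsNormalM (lap A)) :
    ∃ S : Finset (Fin n), S.Nonempty ∧ S ≠ Finset.univ ∧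
      (∀ i ∈ S, ∀ j ∉ S, A i j = 1 ∧ A j i = 0) ∧
      IsNormalM (lap (A.submatrix (fun x : {i // i ∈ S} => (x : Fin n))
        (fun x : {i // i ∈ S} => (x : Fin n)))) ∧
      IsNormalM (lap (A.submatrix (fun x : {i // i ∉ S} => (x : Fin n))
        (fun x : {i // i ∉ S} => (x : Fin n)))) := by
  have hcard : Fintype.card (Fin n) = Fintype.card (Fin (n - 1)) + 1 := by
    have : n ≠ 0 := hn.elim Squarefree.ne_zero
      fun ⟨k, hk, hsq⟩ => hk ▸ mul_ne_zero two_ne_zero hsq.ne_zero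
    simp only [Fintype.card_fin]
    omega
  have hkey := selfCommutator_lap_apply hA hQ hcard hrn
  obtain ⟨S, hSne, hSuniv, hzS, hzSc⟩ :=
    hA.exists_imbalance_two_valued (by simpa using hn) hkey hnn
  have hjoin := directedJoin_of_card_mul_card_le_sum_imbalance hA (S := S) <| by
    rw [Finset.sum_congr rfl hzS, Finset.sum_const, nsmul_eq_mul, Finset.card_compl,
      Nat.cast_sub (Finset.card_le_univ S)]
  exact ⟨S, hSne, hSuniv, hjoin,
    isNormalM_lap_submatrix_mem_of_directedJoin hjoin fun a ha b hb =>
      selfCommutator_apply_eq_of_imbalance_eq (hkey a b) (hzS a ha) (hzS b hb),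
    isNormalM_lap_submatrix_notMem_of_directedJoin hjoin fun a ha b hb =>
      selfCommutator_apply_eq_of_imbalance_eq (hkey a b) (hzSc a ha) (hzSc b hb)⟩
end

section
/- Let n ≥ 3 and let Γ be the digraph of order n² on vertex set V = Fin n × Fin n whose adjacency matrix A is given by: A (i,q) (j,q') = 1 if (i = 0, j ≠ 0, and q = q') or (i ≠ 0, j = 0, and q ≠ q'), and A (i,q) (j,q') = 0 otherwise (in block form, the (1,j)-blocks for j ≥ 2 are identity matrices I_n, the (i,1)-blocks for i ≥ 2 are J_n − I_n, and all other blocks are zero). Then Γ is restricted-normal — its Laplacian L is not a normal matrix but QᴴLQ is normal for a restrictor matrix Q of order n² — and Γ is not a directed join: there is no set S ⊆ V with S ≠ ∅ and S ≠ V such that A u v = 1 and A v u = 0 for all u ∈ S, v ∉ S. -/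
open Matrix

/-!
Let `E = e₀ (𝟙 - e₀)ᵀ` on `Fin n`, with `e₀` the indicator of `0`; then `E² = 0` and the adjacency
matrix is `A = E ⊗ I + Eᵀ ⊗ (J - I)`. Kronecker calculus shows that every out-degree is `n - 1`
(so `L = (n - 1) I - A`), that the vertices `(0, q)` have in-degree `(n - 1)²`, and that
`AᵀA - AAᵀ = (EEᵀ - EᵀE) ⊗ (n - 2) J` only depends on which of the two sides `{(0, q)}` and
`{(i, q) : i ≠ 0}` the row and the column index lie in.

* Comparing diagonal entries of `LᵀL` and `LLᵀ`, a normal Laplacian of a 0/1 digraph has equal in-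
  and out-degrees; so `L` is not normal.
* For a restrictor `Q` a trace count forces `QQᴴ = I - J/n²`, and `LJ = 0`, so the self-commutator
  of `QᴴLQ` is `Qᴴ (LᵀL - LLᵀ - LᵀJL/n²) Q`. The middle matrix is again constant on pairs of sides
  and of the form `x𝟙ᵀ + 𝟙xᵀ`, which `Q` annihilates.
* Every arc joins the two sides and every vertex misses an arc to the other side, so a directed join
  would need an arc inside one side.
-/

open Finset Kronecker ComplexOrder

theorem not_exists_directedJoin_of_bipartite {V α : Type*} [Fintype V] [Zero α] [One α]
    (A : Matrix V V α) (σ : V → Bool) (hσ : ∀ u v, A u v = 1 → σ u ≠ σ v)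
    (hmiss : ∀ u, ∃ v, σ v ≠ σ u ∧ A u v ≠ 1) :
    ¬ ∃ S : Finset V, S.Nonempty ∧ S ≠ Finset.univ ∧ ∀ u ∈ S, ∀ v ∉ S, A u v = 1 ∧ A v u = 0 := by
  rintro ⟨S, ⟨u, hu⟩, hSV, hS⟩
  obtain ⟨v, hv⟩ : ∃ v, v ∉ S := by simpa [Finset.eq_univ_iff_forall] using hSV
  obtain ⟨w, hwu, hw⟩ := hmiss u
  have hwS : w ∈ S := by
    by_contra hwS
    exact hw (hS u hu w hwS).1
  have huv := hσ u v (hS u hu v hv).1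
  have hwv := hσ w v (hS w hwS v hv).1
  revert huv hwu hwv
  cases σ u <;> cases σ v <;> cases σ w <;> decide

section Laplacian
variable {m : Type*} [Fintype m] [DecidableEq m] {A : Matrix m m ℝ}

omit [DecidableEq m] in
lemma IsAdj.mul_self_apply (hA : IsAdj A) (i j : m) : A i j * A i j = A i j := by
  rcases hA.1 i j with h | h <;> simp [h]

lemma IsAdj.lap_mul_self_apply (hA : IsAdj A) (i j : m) :
    lap A i j * lap A i j = (if i = j then (∑ k, A i k) ^ 2 else 0) + A i j := by
  by_cases h : i = j
  · subst h
    simp only [lap, Matrix.sub_apply, diagonal_apply_eq, hA.2, sub_zero, ↓reduceIte, add_zero]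
    ring
  · simp [lap, h, hA.mul_self_apply]

theorem IsAdj.bal_of_isNormalM_lap (hA : IsAdj A) (hL : IsNormalM (lap A)) : Bal A := by
  intro i
  have h := congrFun (congrFun hL i) i
  simp only [star_eq_conjTranspose, conjTranspose_eq_transpose_of_trivial, mul_apply,
    transpose_apply, hA.lap_mul_self_apply, sum_add_distrib, sum_ite_eq, sum_ite_eq', mem_univ,
    ↓reduceIte, add_right_inj] at h
  exact h.symm

lemma lap_eq_smul_one_sub {c : ℝ} (hA : A *ᵥ 1 = c • 1) : lap A = c • 1 - A := by
  ext i j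
  have hi := congrFun hA i
  simp only [mulVec, dotProduct, Pi.one_apply, mul_one, Pi.smul_apply, smul_eq_mul] at hi
  by_cases h : i = j
  · subst h; simp [lap, hi]
  · simp [lap, h, one_apply]

end Laplacian

section Restrictor

lemma Matrix.IsHermitian.eq_zero_of_isIdempotentElem {m R : Type*} [Fintype m] [PartialOrder R]
    [Ring R] [StarRing R] [StarOrderedRing R] [NoZeroDivisors R] {E : Matrix m m R}
    (hH : E.IsHermitian) (hI : IsIdempotentElem E) (ht : E.trace = 0) : E = 0 := by
  rw [← trace_conjTranspose_mul_self_eq_zero_iff, hH.eq, hI.eq, ht]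

lemma vecMulVec_one_mul_self {m R : Type*} [Fintype m] [CommRing R] :
    (vecMulVec 1 1 : Matrix m m R) * vecMulVec 1 1 = (Fintype.card m : R) • vecMulVec 1 1 := by
  rw [vecMulVec_mul_vecMulVec, one_dotProduct_one]
  ext
  simp

variable {m k : Type*} [Fintype m] [Fintype k] [DecidableEq k] {Q : Matrix m k ℂ}

lemma IsRestrictor.conjTranspose_mul_vecMulVec_one (hQ : IsRestrictor Q) :
    Qᴴ * (vecMulVec 1 1 : Matrix m m ℂ) = 0 := by
  rw [mul_vecMulVec, show Qᴴ *ᵥ 1 = 0 from hQ.2, zero_vecMulVec]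

lemma IsRestrictor.one_vecMul (hQ : IsRestrictor Q) : 1 ᵥ* Q = 0 := by
  simpa [star_mulVec, ← Pi.one_def] using congrArg star hQ.2

lemma IsRestrictor.vecMulVec_one_mul (hQ : IsRestrictor Q) :
    (vecMulVec 1 1 : Matrix m m ℂ) * Q = 0 := by
  rw [vecMulVec_mul, hQ.one_vecMul]
  simp

variable [DecidableEq m]

theorem IsRestrictor.mul_conjTranspose_s18 (hQ : IsRestrictor Q)
    (hk : Fintype.card k + 1 = Fintype.card m) :
    Q * Qᴴ = 1 - (Fintype.card m : ℂ)⁻¹ • vecMulVec 1 1 := by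
  set c : ℂ := (Fintype.card m : ℂ)⁻¹
  set J : Matrix m m ℂ := vecMulVec 1 1
  set P := Q * Qᴴ
  have hc : c * Fintype.card m = 1 :=
    inv_mul_cancel₀ (by exact_mod_cast (by omega : Fintype.card m ≠ 0))
  have hPP : P * P = P := by
    rw [Matrix.mul_assoc, ← Matrix.mul_assoc Qᴴ, hQ.1, Matrix.one_mul]
  have hPJ : P * J = 0 := by
    rw [Matrix.mul_assoc, hQ.conjTranspose_mul_vecMulVec_one, Matrix.mul_zero]
  have hJP : J * P = 0 := by
    rw [← Matrix.mul_assoc, hQ.vecMulVec_one_mul, Matrix.zero_mul]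
  have hJJ : c • J * (c • J) = c • J := by
    rw [smul_mul_smul_comm, vecMulVec_one_mul_self, smul_smul, mul_assoc, hc, mul_one]
  have hE : IsIdempotentElem (1 - c • J - P) := by
    simp only [IsIdempotentElem, sub_mul, mul_sub, one_mul, mul_one, hJJ, hPP, smul_mul,
      Matrix.mul_smul, hPJ, hJP, smul_zero]
    abel
  have hH : (1 - c • J - P).IsHermitian := by
    have hJ : Jᴴ = J := by ext; simp [J]
    simp [IsHermitian, P, hJ, c]
  have ht : (1 - c • J - P).trace = 0 := by
    rw [trace_sub, trace_sub, trace_smul, trace_mul_comm, hQ.1, trace_one, trace_one,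
      trace_vecMulVec, one_dotProduct_one, smul_eq_mul, hc, ← hk]
    push_cast
    ring
  exact (sub_eq_zero.1 (hH.eq_zero_of_isIdempotentElem hE ht)).symm

theorem IsRestrictor.isNormalM_conjTranspose_mul_mul (hQ : IsRestrictor Q)
    (hk : Fintype.card k + 1 = Fintype.card m) {M : Matrix m m ℂ} (hM : M *ᵥ 1 = 0)
    {x y : m → ℂ} (h : Mᴴ * M - M * Mᴴ - (Fintype.card m : ℂ)⁻¹ • (Mᴴ * vecMulVec 1 1 * M)
      = vecMulVec x 1 + vecMulVec 1 y) :
    IsNormalM (Qᴴ * M * Q) := by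
  have hMJ : M * vecMulVec 1 1 = 0 := by rw [mul_vecMulVec, hM, zero_vecMulVec]
  rw [IsNormalM, star_eq_conjTranspose, ← sub_eq_zero]
  calc (Qᴴ * M * Q)ᴴ * (Qᴴ * M * Q) - Qᴴ * M * Q * (Qᴴ * M * Q)ᴴ
      = Qᴴ * (Mᴴ * (Q * Qᴴ) * M - M * (Q * Qᴴ) * Mᴴ) * Q := by
        simp only [conjTranspose_mul, conjTranspose_conjTranspose, Matrix.mul_sub,
          Matrix.sub_mul, Matrix.mul_assoc]
    _ = Qᴴ * (vecMulVec x 1 + vecMulVec 1 y) * Q := by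
        rw [← h, hQ.mul_conjTranspose_s18 hk]
        simp only [Matrix.mul_sub, Matrix.sub_mul, Matrix.mul_one, Matrix.mul_smul,
          Matrix.smul_mul, hMJ, smul_zero, sub_zero, Matrix.mul_assoc]
        abel
    _ = 0 := by
        simp only [Matrix.mul_add, mul_vecMulVec, vecMulVec_mul, hQ.one_vecMul,
          show Qᴴ *ᵥ 1 = 0 from hQ.2, vecMulVec_zero, zero_vecMulVec, add_zero]

end Restrictor

section Kronecker
variable {l m R : Type*} [CommRing R]

lemma kronecker_mulVec_one {l' m' : Type*} [Fintype l'] [Fintype m'] (X : Matrix l l' R)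
    (Y : Matrix m m' R) : (X ⊗ₖ Y) *ᵥ 1 = fun u => (X *ᵥ 1) u.1 * (Y *ᵥ 1) u.2 := by
  ext ⟨i, q⟩
  simp only [mulVec, dotProduct, Pi.one_apply, mul_one, Fintype.sum_prod_type, kronecker_apply,
    Finset.sum_mul_sum]

variable [Fintype l] [Fintype m] [DecidableEq m]

theorem transpose_mul_self_sub_mul_transpose_kronecker {E : Matrix l l R} (hE : E * E = 0)
    {K : Matrix m m R} (hK : Kᵀ = K) :
    (E ⊗ₖ 1 + Eᵀ ⊗ₖ K)ᵀ * (E ⊗ₖ 1 + Eᵀ ⊗ₖ K) - (E ⊗ₖ 1 + Eᵀ ⊗ₖ K) * (E ⊗ₖ 1 + Eᵀ ⊗ₖ K)ᵀ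
      = (E * Eᵀ - Eᵀ * E) ⊗ₖ (K * K - 1) := by
  have hEt : Eᵀ * Eᵀ = 0 := by rw [← transpose_mul, hE, transpose_zero]
  simp only [transpose_add, ← kroneckerMap_transpose, transpose_transpose, transpose_one, hK,
    Matrix.add_mul, Matrix.mul_add, ← mul_kronecker_mul, hE, hEt, zero_kronecker,
    Matrix.one_mul, Matrix.mul_one, add_zero, zero_add]
  ext ⟨i, q⟩ ⟨j, p⟩
  simp only [Matrix.sub_apply, Matrix.add_apply, kronecker_apply]
  ring

lemma transpose_mul_self_sub_mul_transpose_smul_one_sub [DecidableEq l] (c : R)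
    (A : Matrix l l R) :
    (c • 1 - A)ᵀ * (c • 1 - A) - (c • 1 - A) * (c • 1 - A)ᵀ = Aᵀ * A - A * Aᵀ := by
  simp only [transpose_sub, transpose_smul, transpose_one, Matrix.sub_mul, Matrix.mul_sub,
    Matrix.smul_mul, Matrix.mul_smul, Matrix.one_mul, Matrix.mul_one, smul_sub]
  abel

end Kronecker

section CompleteGraph
variable {R : Type*} [CommRing R] {n : ℕ}

lemma transpose_vecMulVec_one_sub_one :
    (vecMulVec 1 1 - 1 : Matrix (Fin n) (Fin n) R)ᵀ = vecMulVec 1 1 - 1 := by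
  rw [transpose_sub, transpose_vecMulVec, transpose_one]

lemma vecMulVec_one_sub_one_mul_self :
    (vecMulVec 1 1 - 1 : Matrix (Fin n) (Fin n) R) * (vecMulVec 1 1 - 1) - 1
      = ((n : R) - 2) • vecMulVec 1 1 := by
  rw [Matrix.sub_mul, Matrix.mul_sub, Matrix.mul_sub, vecMulVec_one_mul_self, Fintype.card_fin,
    Matrix.one_mul, Matrix.mul_one, Matrix.mul_one, sub_smul, two_smul]
  abel

lemma vecMulVec_one_sub_one_mulVec_one :
    (vecMulVec 1 1 - 1 : Matrix (Fin n) (Fin n) R) *ᵥ 1 = ((n : R) - 1) • 1 := by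
  rw [sub_mulVec, vecMulVec_mulVec, one_mulVec, one_dotProduct_one]
  ext
  simp

end CompleteGraph

section HubDigraph
variable {R : Type*} [CommRing R] {n : ℕ} [NeZero n]

def hubStar (n : ℕ) [NeZero n] : Matrix (Fin n) (Fin n) R :=
  vecMulVec (Pi.single 0 1) (1 - Pi.single 0 1)

def hubDigraph (n : ℕ) [NeZero n] : Matrix (Fin n × Fin n) (Fin n × Fin n) R :=
  hubStar n ⊗ₖ 1 + (hubStar n)ᵀ ⊗ₖ (vecMulVec 1 1 - 1)

lemma hubDigraph_apply (u v : Fin n × Fin n) :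
    (hubDigraph n : Matrix _ _ R) u v =
      if (u.1.val = 0 ∧ v.1.val ≠ 0 ∧ u.2 = v.2) ∨ (u.1.val ≠ 0 ∧ v.1.val = 0 ∧ u.2 ≠ v.2)
      then 1 else 0 := by
  obtain ⟨i, q⟩ := u
  obtain ⟨j, p⟩ := v
  simp only [hubDigraph, hubStar, Matrix.add_apply, kronecker_apply, transpose_apply,
    vecMulVec_apply, Pi.sub_apply, Pi.one_apply, Pi.single_apply, one_apply, Matrix.sub_apply,
    Fin.val_eq_zero_iff]
  split_ifs <;> simp_all

lemma hubStar_mul_self : (hubStar n : Matrix _ _ R) * hubStar n = 0 := by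
  simp [hubStar, vecMulVec_mul_vecMulVec]

lemma hubStar_mul_transpose : (hubStar n : Matrix _ _ R) * (hubStar n)ᵀ
    = ((n : R) - 1) • vecMulVec (Pi.single 0 1) (Pi.single 0 1) := by
  simp [hubStar, transpose_vecMulVec, vecMulVec_mul_vecMulVec, sub_dotProduct, dotProduct_sub]

lemma transpose_hubStar_mul : (hubStar n : Matrix _ _ R)ᵀ * hubStar n
    = vecMulVec (1 - Pi.single 0 1) (1 - Pi.single 0 1) := by
  simp [hubStar, transpose_vecMulVec, vecMulVec_mul_vecMulVec]

lemma hubStar_mulVec_one : (hubStar n : Matrix _ _ R) *ᵥ 1 = ((n : R) - 1) • Pi.single 0 1 := by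
  ext i
  simp [hubStar, vecMulVec_mulVec, sub_dotProduct, mul_comm]

lemma transpose_hubStar_mulVec_one : (hubStar n : Matrix _ _ R)ᵀ *ᵥ 1 = 1 - Pi.single 0 1 := by
  simp [hubStar, transpose_vecMulVec, vecMulVec_mulVec]

lemma hubDigraph_mulVec_one : (hubDigraph n : Matrix _ _ R) *ᵥ 1 = ((n : R) - 1) • 1 := by
  rw [hubDigraph, add_mulVec, kronecker_mulVec_one, kronecker_mulVec_one, hubStar_mulVec_one,
    transpose_hubStar_mulVec_one, one_mulVec, vecMulVec_one_sub_one_mulVec_one]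
  ext u
  by_cases h : u.1 = 0 <;> simp [h]

lemma transpose_hubDigraph_mulVec_one :
    (hubDigraph n : Matrix _ _ R)ᵀ *ᵥ 1 = fun u => if u.1 = 0 then ((n : R) - 1) ^ 2 else 1 := by
  rw [hubDigraph, transpose_add, ← kroneckerMap_transpose, ← kroneckerMap_transpose,
    transpose_transpose, transpose_one, transpose_vecMulVec_one_sub_one, add_mulVec,
    kronecker_mulVec_one, kronecker_mulVec_one, hubStar_mulVec_one,
    transpose_hubStar_mulVec_one, one_mulVec, vecMulVec_one_sub_one_mulVec_one]
  ext u
  by_cases h : u.1 = 0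
  · simp only [Pi.sub_apply, Pi.one_apply, mul_one, Pi.smul_apply, smul_eq_mul, Pi.add_apply, h,
      Pi.single_eq_same, sub_self, zero_add, ↓reduceIte]
    ring
  · simp [h]

theorem hubDigraph_commutator :
    (hubDigraph n : Matrix _ _ R)ᵀ * hubDigraph n - hubDigraph n * (hubDigraph n)ᵀ
      = (((n : R) - 1) • vecMulVec (Pi.single 0 1) (Pi.single 0 1)
          - vecMulVec (1 - Pi.single 0 1) (1 - Pi.single 0 1))
        ⊗ₖ (((n : R) - 2) • vecMulVec 1 1) := by
  rw [hubDigraph, transpose_mul_self_sub_mul_transpose_kronecker hubStar_mul_self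
    transpose_vecMulVec_one_sub_one, hubStar_mul_transpose, transpose_hubStar_mul,
    vecMulVec_one_sub_one_mul_self]

end HubDigraph

theorem exists_hubDigraph_compressed_commutator_eq {R : Type*} [Field R] [CharZero R] {n : ℕ}
    [NeZero n] :
    let L : Matrix (Fin n × Fin n) (Fin n × Fin n) R := ((n : R) - 1) • 1 - hubDigraph n
    ∃ x, Lᵀ * L - L * Lᵀ - (Fintype.card (Fin n × Fin n) : R)⁻¹ • (Lᵀ * vecMulVec 1 1 * L)
      = vecMulVec x 1 + vecMulVec 1 x := by
  intro L
  have hc : Lᵀ *ᵥ 1 = fun u => if u.1 = 0 then -(((n : R) - 1) * (n - 2)) else n - 2 := by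
    rw [transpose_sub, sub_mulVec, transpose_smul, transpose_one, smul_mulVec, one_mulVec,
      transpose_hubDigraph_mulVec_one]
    ext u
    by_cases h : u.1 = 0 <;>
      simp only [Pi.sub_apply, Pi.smul_apply, Pi.one_apply, smul_eq_mul, mul_one, h,
        ↓reduceIte] <;> ring
  -- `x u` is half the diagonal entry at `(u, u)`; that the entries between the two sides then
  -- match as well is the actual content.
  refine ⟨fun u => if u.1 = 0
    then ((n - 1) * (n - 2) - ((n - 1) * (n - 2) / n) ^ 2) / 2
    else (-(n - 2) - ((n - 2) / n) ^ 2) / 2, ?_⟩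
  rw [transpose_mul_self_sub_mul_transpose_smul_one_sub, hubDigraph_commutator, mul_vecMulVec,
    vecMulVec_mul, ← mulVec_transpose, hc]
  have hn : (n : R) ≠ 0 := NeZero.ne _
  ext ⟨i, q⟩ ⟨j, p⟩
  simp only [Matrix.sub_apply, Matrix.add_apply, Matrix.smul_apply, kronecker_apply,
    vecMulVec_apply, Pi.sub_apply, Pi.one_apply, smul_eq_mul, Fintype.card_prod, Fintype.card_fin,
    Nat.cast_mul, mul_one, one_mul]
  by_cases hi : i = 0 <;> by_cases hj : j = 0 <;>
    simp only [hi, hj, Pi.single_eq_same, Pi.single_eq_of_ne, ne_eq, not_false_eq_true,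
      ↓reduceIte] <;> field_simp <;> ring

section HubDigraphReal
variable {n : ℕ} [NeZero n]

lemma isAdj_hubDigraph : IsAdj (hubDigraph n : Matrix _ _ ℝ) :=
  ⟨fun u v => by rw [hubDigraph_apply]; split_ifs <;> simp, fun u => by simp [hubDigraph_apply]⟩

lemma not_bal_hubDigraph (hn : 3 ≤ n) : ¬ Bal (hubDigraph n : Matrix _ _ ℝ) := by
  intro h
  have hout := congrFun (hubDigraph_mulVec_one (R := ℝ) (n := n)) (0, 0)
  have hin := congrFun (transpose_hubDigraph_mulVec_one (R := ℝ) (n := n)) (0, 0)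
  simp only [mulVec, dotProduct, Pi.one_apply, mul_one, transpose_apply] at hout hin
  have h0 := h (0, 0)
  rw [hout, hin] at h0
  have : (3 : ℝ) ≤ n := by exact_mod_cast hn
  simp only [Pi.smul_apply, Pi.one_apply, smul_eq_mul, mul_one, ↓reduceIte] at h0
  nlinarith

lemma not_exists_directedJoin_hubDigraph (hn : 2 ≤ n) :
    ¬ ∃ S : Finset (Fin n × Fin n), S.Nonempty ∧ S ≠ Finset.univ ∧
        ∀ u ∈ S, ∀ v ∉ S, (hubDigraph n : Matrix _ _ ℝ) u v = 1 ∧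
          (hubDigraph n : Matrix _ _ ℝ) v u = 0 := by
  refine not_exists_directedJoin_of_bipartite _ (fun u => u.1.val = 0) (fun u v h => ?_)
    fun u => ?_
  · rw [hubDigraph_apply] at h
    split_ifs at h with h'
    · rcases h' with ⟨hu, hv, -⟩ | ⟨hu, hv, -⟩ <;> simp [hu, hv]
    · exact absurd h zero_ne_one
  · obtain ⟨i, q⟩ := u
    by_cases hi : i.val = 0
    · have : Nontrivial (Fin n) := Fin.nontrivial_iff_two_le.mpr hn
      obtain ⟨q', hq'⟩ := exists_ne q
      refine ⟨(⟨1, by omega⟩, q'), by simp [hi], ?_⟩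
      simp [hubDigraph_apply, hi, Ne.symm hq']
    · exact ⟨(0, q), by simp [hi], by simp [hubDigraph_apply, hi]⟩

lemma lapC_hubDigraph : lapC (hubDigraph n) = ((n : ℂ) - 1) • 1 - hubDigraph n := by
  have hmap : (hubDigraph n : Matrix _ _ ℝ).map ((↑) : ℝ → ℂ) = hubDigraph n := by
    ext u v
    simp only [map_apply, hubDigraph_apply]
    split_ifs <;> simp
  rw [lapC, lap_eq_smul_one_sub hubDigraph_mulVec_one, Matrix.map_sub _ Complex.ofReal_sub, hmap]
  ext u v
  by_cases h : u = v <;> simp [h, one_apply]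

end HubDigraphReal

lemma conjTranspose_lapC {m : Type*} [Fintype m] [DecidableEq m] (A : Matrix m m ℝ) :
    (lapC A)ᴴ = (lapC A)ᵀ := by
  ext
  simp [lapC]

/-- For `n ≥ 3`, the digraph of order `n²` whose adjacency matrix has
block form `[[0, I, …, I], [J - I, 0, …, 0], …, [J - I, 0, …, 0]]` is restricted-normal
but is not a directed join. -/
theorem restricted_normal_not_directed_join_construction {n : ℕ} (hn : 3 ≤ n)
    (A : Matrix (Fin n × Fin n) (Fin n × Fin n) ℝ)
    (hA : ∀ p q : Fin n × Fin n, A p q =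
      if (p.1.val = 0 ∧ q.1.val ≠ 0 ∧ p.2 = q.2) ∨
         (p.1.val ≠ 0 ∧ q.1.val = 0 ∧ p.2 ≠ q.2) then 1 else 0) :
    ¬ IsNormalM (lap A) ∧
    (∀ Q : Matrix (Fin n × Fin n) (Fin (n ^ 2 - 1)) ℂ, IsRestrictor Q →
      IsNormalM (Qᴴ * lapC A * Q)) ∧
    ¬ ∃ S : Finset (Fin n × Fin n), S.Nonempty ∧ S ≠ Finset.univ ∧
        ∀ u ∈ S, ∀ v ∉ S, A u v = 1 ∧ A v u = 0 := by
  have : NeZero n := ⟨by omega⟩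
  obtain rfl : A = hubDigraph n := by ext u v; rw [hA, hubDigraph_apply]
  refine ⟨fun hN => not_bal_hubDigraph hn (isAdj_hubDigraph.bal_of_isNormalM_lap hN),
    fun Q hQ => ?_, not_exists_directedJoin_hubDigraph (by omega)⟩
  have hk : Fintype.card (Fin (n ^ 2 - 1)) + 1 = Fintype.card (Fin n × Fin n) := by
    simp only [Fintype.card_fin, Fintype.card_prod, ← sq]
    exact Nat.sub_add_cancel (Nat.one_le_pow _ _ (by omega))
  obtain ⟨x, hx⟩ := exists_hubDigraph_compressed_commutator_eq (n := n) (R := ℂ)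
  refine hQ.isNormalM_conjTranspose_mul_mul hk ?_ (x := x) (y := x) ?_
  · rw [lapC_hubDigraph, sub_mulVec, hubDigraph_mulVec_one, smul_mulVec, one_mulVec, sub_self]
  · rwa [conjTranspose_lapC, lapC_hubDigraph]
end
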